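/- arXiv:2506.14279 — 2 statements merged into one kernel-verified Lean document; each statement's English description precedes it below -/
import Mathlib

section
/- Let G be an abelian group, G₀ ⊆ G a subset, and H = B±(G₀). Then: (1) H is half-factorial (i.e. |L(a)| = 1 for each a ∈ H) if and only if D(H) ≤ 2; (2) if Δ(H) ≠ ∅ and D(H) is finite, then min Δ(H) divides D(H) − 2. -/
open Multiset

variable {G : Type*} [AddCommGroup G]

/-- `S` is a plus-minus weighted zero-sum sequence: `S` splits as `S₁ + S₂` with
`S₁.sum = S₂.sum`, i.e. some choice of signs `ε_i ∈ {+1, -1}` makes the weighted sum vanish. -/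
def IsPMZeroSum (S : Multiset G) : Prop :=
  ∃ S₁ S₂ : Multiset G, S = S₁ + S₂ ∧ S₁.sum = S₂.sum

/-- The monoid `B±(G₀)` of plus-minus weighted zero-sum sequences over `G₀ ⊆ G`, as an
additive submonoid of the free commutative monoid `Multiset G` of sequences over `G`. -/
def PMZS (G₀ : Set G) : AddSubmonoid (Multiset G) where
  carrier := {S | (∀ g ∈ S, g ∈ G₀) ∧ IsPMZeroSum S}
  zero_mem' := ⟨fun g hg => absurd hg (Multiset.notMem_zero g), 0, 0, by simp, rfl⟩
  add_mem' := by
    rintro S T ⟨hS, S₁, S₂, rfl, h12⟩ ⟨hT, T₁, T₂, rfl, h34⟩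
    exact ⟨fun g hg => (Multiset.mem_add.mp hg).elim (fun h => hS g h) (fun h => hT g h),
      S₁ + T₁, S₂ + T₂, add_add_add_comm S₁ S₂ T₁ T₂, by simp [h12, h34]⟩

/-- `A` is an atom (irreducible element) of the submonoid `H` of `Multiset G`. -/
def IsPMAtom (H : AddSubmonoid (Multiset G)) (A : Multiset G) : Prop :=
  A ∈ H ∧ A ≠ 0 ∧ ∀ B C : Multiset G, B ∈ H → C ∈ H → A = B + C → B = 0 ∨ C = 0

/-- The set of lengths `L(a)` of `a` in `H`: all `k` such that `a` is a sum of `k` atoms of `H`. -/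
def LengthSet (H : AddSubmonoid (Multiset G)) (a : Multiset G) : Set ℕ :=
  {k | ∃ l : List (Multiset G), (∀ A ∈ l, IsPMAtom H A) ∧ l.sum = a ∧ l.length = k}

/-- The set of successive distances `Δ(L)` of a set `L ⊆ ℕ`. -/
def DistSet (L : Set ℕ) : Set ℕ :=
  {d | 0 < d ∧ ∃ a ∈ L, a + d ∈ L ∧ ∀ b ∈ L, a < b → a + d ≤ b}

/-- The set of distances `Δ(H) = ⋃_{a ∈ H} Δ(L(a))`. -/
def DeltaM (H : AddSubmonoid (Multiset G)) : Set ℕ :=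
  {d | ∃ a ∈ H, d ∈ DistSet (LengthSet H a)}

/-- `a` divides `b` in `H`. -/
def DvdIn (H : AddSubmonoid (Multiset G)) (a b : Multiset G) : Prop :=
  ∃ c ∈ H, b = a + c

/-- `S` is a divisor-closed submonoid of `H`. -/
def IsDivClosed (H S : AddSubmonoid (Multiset G)) : Prop :=
  S ≤ H ∧ ∀ s ∈ S, ∀ a ∈ H, DvdIn H a s → a ∈ S

/-- The set of minimal distances
`Δ*(H) = {min Δ(S) : S a divisor-closed submonoid of H with Δ(S) ≠ ∅}`. -/
def DeltaStar (H : AddSubmonoid (Multiset G)) : Set ℕ :=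
  {d | ∃ S : AddSubmonoid (Multiset G), IsDivClosed H S ∧ (DeltaM S).Nonempty ∧ d = sInf (DeltaM S)}

/-- The set of lengths of atoms of `H`. -/
def AtomLengths (H : AddSubmonoid (Multiset G)) : Set ℕ :=
  {n | ∃ A : Multiset G, IsPMAtom H A ∧ Multiset.card A = n}

/-- The Davenport constant `D(H)` of `H`: the supremum of the lengths of the atoms of `H`.  -/
noncomputable def DavD (H : AddSubmonoid (Multiset G)) : ℕ :=
  sSup (AtomLengths H)

/-- The system of sets of lengths `L(H)` of `H`. -/
def LSys (H : AddSubmonoid (Multiset G)) : Set (Set ℕ) :=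
  {L | ∃ a ∈ H, L = LengthSet H a}

/-- `d` is the greatest common divisor of the set `S` of integers. -/
def IsSetGCD (S : Set ℤ) (d : ℕ) : Prop :=
  (∀ x ∈ S, (d : ℤ) ∣ x) ∧ ∀ c : ℕ, (∀ x ∈ S, (c : ℤ) ∣ x) → c ∣ d

/-- A family `e` of elements of an abelian group is independent if `∑ c i • e i = 0`
with integer coefficients implies `c i • e i = 0` for each `i`. -/
def IsIndepFamily {k : ℕ} (e : Fin k → G) : Prop :=
  ∀ c : Fin k → ℤ, ∑ i, c i • e i = 0 → ∀ i, c i • e i = 0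

/-- The (classical) Davenport constant of the abelian group `G`: the smallest `ℓ` such that
every sequence over `G` of length at least `ℓ` has a nonempty zero-sum subsequence. -/
noncomputable def DavenportGroup (G : Type*) [AddCommGroup G] : ℕ :=
  sInf {ℓ | ∀ S : Multiset G, ℓ ≤ Multiset.card S → ∃ T, T ≤ S ∧ T ≠ 0 ∧ T.sum = 0}

/-!
An atom of `B±(G₀)` of length at least 2 cannot contain `0`, and for every nonzero `g ∈ G₀` the
sequence `g²` is an atom. Hence for an atom `A = g₁ ⋯ gₙ` with `n ≥ 2` the element `A²` factors
both as `A · A` and as `g₁² ⋯ gₙ²`, so `{2, n} ⊆ L(A²)`. If instead all atoms have length at most 2,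
then every atom has `v_0(A) + |A| = 2`, so every factorization of `a` has length `(v_0(a) + |a|) / 2`.
For (2), `min Δ(H)` divides every distance (combine `(q + 1)` copies of a factorization realizing
`min Δ(H)` with one realizing a distance `e = q · min Δ(H) + r`, and a remainder `0 < r` would
produce a smaller distance), hence every difference of two lengths; apply this to `2, D(H) ∈ L(A²)`
for an atom `A` of maximal length.
-/

lemma exists_mem_distSet_of_lt {L : Set ℕ} {u w : ℕ} (hu : u ∈ L) (hw : w ∈ L) (huw : u < w) :
    ∃ v ∈ L, u < v ∧ v ≤ w ∧ v - u ∈ DistSet L := by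
  have hne : {b | b ∈ L ∧ u < b}.Nonempty := ⟨w, hw, huw⟩
  obtain ⟨hvL, huv⟩ := Nat.sInf_mem hne
  set v := sInf {b | b ∈ L ∧ u < b}
  have hv : u + (v - u) = v := by omega
  refine ⟨v, hvL, huv, Nat.sInf_le ⟨hw, huw⟩, by omega, u, hu, by rwa [hv], fun b hb hub => ?_⟩
  rw [hv]
  exact Nat.sInf_le ⟨hb, hub⟩

section LengthSet

omit [AddCommGroup G]

variable {H : AddSubmonoid (Multiset G)}

lemma add_mem_lengthSet_add {a b : Multiset G} {u v : ℕ} (hu : u ∈ LengthSet H a)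
    (hv : v ∈ LengthSet H b) : u + v ∈ LengthSet H (a + b) := by
  obtain ⟨l₁, hl₁, rfl, rfl⟩ := hu
  obtain ⟨l₂, hl₂, rfl, rfl⟩ := hv
  refine ⟨l₁ ++ l₂, fun A hA => ?_, List.sum_append, List.length_append⟩
  exact (List.mem_append.mp hA).elim (hl₁ A) (hl₂ A)

lemma mul_mem_lengthSet_nsmul {a : Multiset G} {k : ℕ} (hk : k ∈ LengthSet H a) (n : ℕ) :
    n * k ∈ LengthSet H (n • a) := by
  induction n with
  | zero => exact ⟨[], by simp, by simp, by simp⟩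
  | succ n ih => simpa [succ_nsmul, Nat.succ_mul] using add_mem_lengthSet_add ih hk

lemma lengthSet_nonempty {a : Multiset G} (ha : a ∈ H) : (LengthSet H a).Nonempty := by
  induction a using WellFoundedLT.induction with
  | _ a ih =>
    by_cases hat : IsPMAtom H a
    · exact ⟨1, [a], by simpa using hat, by simp, rfl⟩
    rcases eq_or_ne a 0 with rfl | ha0
    · exact ⟨0, [], by simp, rfl, rfl⟩
    obtain ⟨B, C, hB, hC, rfl, hB0, hC0⟩ : ∃ B C, B ∈ H ∧ C ∈ H ∧ a = B + C ∧ B ≠ 0 ∧ C ≠ 0 := by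
      simpa [IsPMAtom, ha, ha0] using hat
    obtain ⟨u, hu⟩ := ih B (lt_add_of_pos_right B (pos_iff_ne_zero.mpr hC0)) hB
    obtain ⟨v, hv⟩ := ih C (lt_add_of_pos_left C (pos_iff_ne_zero.mpr hB0)) hC
    exact ⟨u + v, add_mem_lengthSet_add hu hv⟩

lemma two_mem_lengthSet_add_self {A : Multiset G} (hA : IsPMAtom H A) :
    2 ∈ LengthSet H (A + A) :=
  ⟨[A, A], by simp [hA], by simp, rfl⟩

lemma eq_nsmul_of_mem_lengthSet {M : Type*} [AddCommMonoid M] (φ : Multiset G →+ M) {c : M}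
    (hφ : ∀ A, IsPMAtom H A → φ A = c) {a : Multiset G} {k : ℕ} (hk : k ∈ LengthSet H a) :
    φ a = k • c := by
  obtain ⟨l, hl, rfl, rfl⟩ := hk
  rw [map_list_sum, List.sum_eq_card_nsmul _ c, List.length_map]
  simpa using fun A hA => hφ A (hl A hA)

lemma sInf_deltaM_dvd_of_mem {e : ℕ} (he : e ∈ DeltaM H) : sInf (DeltaM H) ∣ e := by
  set d := sInf (DeltaM H)
  obtain ⟨a, ha, hd, k, hk, hkd, -⟩ : d ∈ DeltaM H := Nat.sInf_mem ⟨e, he⟩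
  obtain ⟨b, hb, he0, m, hm, hme, -⟩ := he
  by_contra hnd
  have hr : 0 < e % d := Nat.pos_of_ne_zero fun h => hnd (Nat.dvd_of_mod_eq_zero h)
  have hrd : e % d < d := Nat.mod_lt e hd
  have hediv := Nat.div_add_mod e d
  -- `c = (q + 1) a + b` has the lengths `(q + 1) k + m + e` and `(q + 1) k + m + (q + 1) d`,
  -- whose difference `d - e % d` is positive and smaller than `d`.
  set q := e / d
  have hc : (q + 1) • a + b ∈ H := add_mem (AddSubmonoid.nsmul_mem H ha _) hb
  have hshort := add_mem_lengthSet_add (mul_mem_lengthSet_nsmul hk (q + 1)) hme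
  have hlong := add_mem_lengthSet_add (mul_mem_lengthSet_nsmul hkd (q + 1)) hm
  obtain ⟨v, -, hv, hvle, hdist⟩ := exists_mem_distSet_of_lt hshort hlong (by nlinarith)
  have hmin : d ≤ v - ((q + 1) * k + (m + e)) := Nat.sInf_le ⟨_, hc, hdist⟩
  rw [show (q + 1) * (k + d) = (q + 1) * k + d * q + d by ring] at hvle
  omega

lemma sInf_deltaM_dvd_sub {a : Multiset G} (ha : a ∈ H) {u v : ℕ} (hu : u ∈ LengthSet H a)
    (hv : v ∈ LengthSet H a) (huv : u ≤ v) : sInf (DeltaM H) ∣ v - u := by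
  induction h : v - u using Nat.strong_induction_on generalizing u with
  | _ n ih =>
    rcases huv.eq_or_lt with rfl | hlt
    · rw [← h, Nat.sub_self]
      exact dvd_zero _
    obtain ⟨w, hw, huw, hwv, hdist⟩ := exists_mem_distSet_of_lt hu hv hlt
    rw [show n = (v - w) + (w - u) by omega]
    exact dvd_add (ih _ (by omega) hw hwv rfl) (sInf_deltaM_dvd_of_mem ⟨a, ha, hdist⟩)

end LengthSet

section PlusMinus

lemma eq_zero_of_isPMZeroSum_singleton {g : G} (h : IsPMZeroSum ({g} : Multiset G)) : g = 0 := by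
  obtain ⟨S₁, S₂, hS, hsum⟩ := h
  rcases mem_add.mp (hS ▸ mem_singleton_self g) with hg | hg
  · obtain ⟨t, rfl⟩ := exists_cons_of_mem hg
    obtain ⟨rfl, rfl⟩ : t = 0 ∧ S₂ = 0 := by simpa [eq_comm (a := (0 : Multiset G))] using hS
    simpa using hsum
  · obtain ⟨t, rfl⟩ := exists_cons_of_mem hg
    obtain ⟨rfl, rfl⟩ : S₁ = 0 ∧ t = 0 := by simpa [eq_comm (a := (0 : Multiset G))] using hS
    simpa using hsum.symm

lemma IsPMZeroSum.of_cons_zero {S : Multiset G} (h : IsPMZeroSum (0 ::ₘ S)) : IsPMZeroSum S := by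
  obtain ⟨S₁, S₂, hS, hsum⟩ := h
  rcases mem_add.mp (hS ▸ mem_cons_self 0 S) with h₀ | h₀
  · obtain ⟨t, rfl⟩ := exists_cons_of_mem h₀
    exact ⟨t, S₂, by simpa using hS, by simpa using hsum⟩
  · obtain ⟨t, rfl⟩ := exists_cons_of_mem h₀
    exact ⟨S₁, t, by simpa using hS, by simpa using hsum⟩

variable {G₀ : Set G}

lemma IsPMAtom.eq_singleton_zero_of_zero_mem {A : Multiset G} (hA : IsPMAtom (PMZS G₀) A)
    (h0 : (0 : G) ∈ A) : A = {0} := by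
  obtain ⟨T, rfl⟩ := exists_cons_of_mem h0
  obtain ⟨⟨hG₀, hsum⟩, -, hirr⟩ := hA
  have hzero : ({0} : Multiset G) ∈ PMZS G₀ :=
    ⟨by simpa using hG₀ 0 (mem_cons_self 0 T), {0}, 0, by simp, by simp⟩
  have hT : T ∈ PMZS G₀ := ⟨fun g hg => hG₀ g (mem_cons_of_mem hg), hsum.of_cons_zero⟩
  rcases hirr _ _ hzero hT (singleton_add 0 T).symm with h | rfl
  · simp at h
  · rfl

lemma IsPMAtom.zero_notMem_of_two_le_card {A : Multiset G} (hA : IsPMAtom (PMZS G₀) A)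
    (h2 : 2 ≤ card A) : (0 : G) ∉ A := fun h0 => by
  simp [hA.eq_singleton_zero_of_zero_mem h0] at h2

lemma isPMAtom_of_card_eq_two {A : Multiset G} (hA : A ∈ PMZS G₀) (h0 : (0 : G) ∉ A)
    (h2 : card A = 2) : IsPMAtom (PMZS G₀) A := by
  refine ⟨hA, fun h => by simp [h] at h2, fun B C hB hC hBC => ?_⟩
  by_contra! hBC0
  obtain ⟨x, rfl⟩ : ∃ x, B = {x} := card_eq_one.mp <| by
    have hcard : card B + card C = 2 := by rw [← card_add, ← hBC, h2]
    have := card_pos.mpr hBC0.1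
    have := card_pos.mpr hBC0.2
    omega
  obtain rfl := eq_zero_of_isPMZeroSum_singleton hB.2
  exact h0 (hBC ▸ mem_add.mpr (Or.inl (mem_singleton_self 0)))

lemma isPMAtom_pair {g : G} (hg : g ∈ G₀) (hg0 : g ≠ 0) : IsPMAtom (PMZS G₀) {g, g} :=
  isPMAtom_of_card_eq_two ⟨by simpa using hg, {g}, {g}, rfl, rfl⟩ (by simpa using hg0.symm) rfl

lemma card_mem_lengthSet_add_self {A : Multiset G} (hA : A ∈ PMZS G₀) (h0 : (0 : G) ∉ A) :
    card A ∈ LengthSet (PMZS G₀) (A + A) := by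
  refine ⟨(A.map fun g => {g, g}).toList, fun B hB => ?_, ?_, by simp⟩
  · obtain ⟨g, hg, rfl⟩ := mem_map.mp (mem_toList.mp hB)
    exact isPMAtom_pair (hA.1 g hg) (ne_of_mem_of_not_mem hg h0)
  · have hpair : ∀ g : G, ({g, g} : Multiset G) = {g} + {g} := fun g => rfl
    simp only [sum_toList, hpair, sum_map_add, sum_map_singleton]

lemma count_zero_add_card_of_isPMAtom [DecidableEq G] {A : Multiset G}
    (hA : IsPMAtom (PMZS G₀) A) (h2 : card A ≤ 2) : count 0 A + card A = 2 := by
  by_cases h0 : (0 : G) ∈ A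
  · simp [hA.eq_singleton_zero_of_zero_mem h0]
  rw [count_eq_zero.mpr h0, zero_add]
  refine le_antisymm h2 (Nat.two_le_iff _ |>.mpr ⟨fun h => hA.2.1 (card_eq_zero.mp h), fun h => ?_⟩)
  obtain ⟨g, rfl⟩ := card_eq_one.mp h
  exact h0 (by simpa using (eq_zero_of_isPMZeroSum_singleton hA.1.2).symm)

theorem unique_length_iff_card_le_two :
    (∀ a ∈ PMZS G₀, ∃! k : ℕ, k ∈ LengthSet (PMZS G₀) a) ↔
      ∀ A : Multiset G, IsPMAtom (PMZS G₀) A → card A ≤ 2 := by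
  classical
  constructor
  · intro hHF A hA
    by_contra! h2
    have h0 := hA.zero_notMem_of_two_le_card h2.le
    have := (hHF _ (add_mem hA.1 hA.1)).unique (two_mem_lengthSet_add_self hA)
      (card_mem_lengthSet_add_self hA.1 h0)
    omega
  · intro hle a ha
    obtain ⟨k, hk⟩ := lengthSet_nonempty ha
    refine ⟨k, hk, fun k' hk' => ?_⟩
    have hweight {j : ℕ} (hj : j ∈ LengthSet (PMZS G₀) a) : count 0 a + card a = j * 2 := by
      have hatom (A : Multiset G) (hA : IsPMAtom (PMZS G₀) A) :
          (countAddMonoidHom (0 : G) + cardHom : Multiset G →+ ℕ) A = 2 :=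
        count_zero_add_card_of_isPMAtom hA (hle A hA)
      simpa using eq_nsmul_of_mem_lengthSet _ hatom hj
    have := (hweight hk').symm.trans (hweight hk)
    omega

end PlusMinus

/-- For `H = B±(G₀)`: (1) `H` is half-factorial iff `D(H) ≤ 2` (i.e. iff every atom has
length at most 2); (2) if `Δ(H) ≠ ∅` and `D(H)` is finite, then `min Δ(H) ∣ D(H) - 2`. -/
theorem stmt_2 (G : Type*) [AddCommGroup G] (G₀ : Set G) :
    ((∀ a ∈ PMZS G₀, ∃! k : ℕ, k ∈ LengthSet (PMZS G₀) a) ↔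
      ∀ A : Multiset G, IsPMAtom (PMZS G₀) A → Multiset.card A ≤ 2) ∧
    ((DeltaM (PMZS G₀)).Nonempty → BddAbove (AtomLengths (PMZS G₀)) →
      sInf (DeltaM (PMZS G₀)) ∣ DavD (PMZS G₀) - 2) := by
  refine ⟨unique_length_iff_card_le_two, fun hΔ hbdd => ?_⟩
  obtain ⟨A₀, hA₀, hA₀card⟩ : ∃ A, IsPMAtom (PMZS G₀) A ∧ 2 < card A := by
    by_contra! hle
    obtain ⟨e, a, ha, he, k, hk, hke, -⟩ := hΔ
    have := (unique_length_iff_card_le_two.mpr hle a ha).unique hk hke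
    omega
  obtain ⟨A, hA, hAcard⟩ : DavD (PMZS G₀) ∈ AtomLengths (PMZS G₀) :=
    Nat.sSup_mem ⟨_, A₀, hA₀, rfl⟩ hbdd
  have h3 : 2 < card A := hAcard ▸ hA₀card.trans_le (le_csSup hbdd ⟨A₀, hA₀, rfl⟩)
  rw [← hAcard]
  exact sInf_deltaM_dvd_sub (add_mem hA.1 hA.1) (two_mem_lengthSet_add_self hA)
    (card_mem_lengthSet_add_self hA.1 (hA.zero_notMem_of_two_le_card h3.le)) h3.le
end

section
/- Let G be a finite abelian group of exponent n, where n is odd and at least 3, and let H = B±(G). Let D₁ = {d − 2 : d ∣ n, d ≥ 3} and let D₂ = {d' ∈ ℕ : d' ∣ d for some d ∈ D₁}. Then D₁ ⊆ Δ*(H) ⊆ D₂; in particular, max Δ*(H) = n − 2. -/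
/-!
For `g` of odd order `d ≥ 3`, the atoms of `B±({g})` are `g²` and `g^d`, so a factorization of
`g^N` using `b` atoms `g^d` has length `(N - (d - 2) b) / 2`. Hence every distance of `B±({g})` is
a multiple of `d - 2`, and `L(g^{2d}) = {2, d}` shows that `d - 2` occurs; this gives `D₁ ⊆ Δ*(H)`.
Conversely, a divisor-closed `S ⊆ H` with `Δ(S) ≠ ∅` contains a sequence with a term `g ≠ 0`,
hence `g²` and all of `B±({g})`, so `ord g - 2 ∈ Δ(S)`; and `min Δ(S)` divides every element of
`Δ(S)`, since two factorizations whose lengths differ by `e` combined with copies of two whose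
lengths differ by `min Δ(S)` produce lengths `e mod min Δ(S)` apart.
-/

open Multiset

variable {G : Type*} [AddCommGroup G]

lemma Multiset.replicate_eq_zero_iff {α : Type*} {a : α} {k : ℕ} : replicate k a = 0 ↔ k = 0 := by
  rw [← card_eq_zero, card_replicate]

lemma mem_PMZS_univ {T : Multiset G} : T ∈ PMZS (Set.univ : Set G) ↔ IsPMZeroSum T :=
  ⟨And.right, fun h => ⟨fun _ _ => Set.mem_univ _, h⟩⟩

lemma isPMZeroSum_add_self (R : Multiset G) : IsPMZeroSum (R + R) := ⟨R, R, rfl, rfl⟩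

lemma isPMZeroSum_replicate_zero (k : ℕ) : IsPMZeroSum (replicate k (0 : G)) :=
  ⟨replicate k 0, 0, (add_zero _).symm, by simp⟩

lemma isDivClosed_PMZS (G₀ : Set G) : IsDivClosed (PMZS (Set.univ : Set G)) (PMZS G₀) := by
  refine ⟨fun T hT => mem_PMZS_univ.2 hT.2, ?_⟩
  rintro T hT A hA ⟨C, -, rfl⟩
  exact ⟨fun x hx => hT.1 x (mem_add.2 (Or.inl hx)), hA.2⟩

lemma eq_replicate_of_mem_PMZS_singleton {g : G} {T : Multiset G} (hT : T ∈ PMZS ({g} : Set G)) :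
    T = replicate (card T) g :=
  eq_replicate_card.2 hT.1

lemma exists_addOrderOf_eq_of_dvd_exponent (hn : AddMonoid.exponent G ≠ 0) {d : ℕ}
    (hd : d ∣ AddMonoid.exponent G) : ∃ g : G, addOrderOf g = d := by
  obtain ⟨g₀, hg₀⟩ := AddMonoid.exists_addOrderOf_eq_exponent (AddMonoid.exponent_ne_zero.1 hn)
  exact ⟨_, addOrderOf_nsmul_addOrderOf_sub (hg₀ ▸ hn) (hg₀ ▸ hd)⟩

section Replicate

variable {g : G} {d : ℕ}

lemma isPMZeroSum_replicate_iff (hd : addOrderOf g = d) (hodd : Odd d) (k : ℕ) :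
    IsPMZeroSum (replicate k g) ↔ Even k ∨ d ≤ k := by
  constructor
  · rintro ⟨S₁, S₂, hsplit, hsum⟩
    obtain ⟨a, -, rfl⟩ := le_replicate_iff.1 ((le_add_right S₁ S₂).trans_eq hsplit.symm)
    obtain ⟨b, -, rfl⟩ := le_replicate_iff.1 ((le_add_left S₂ _).trans_eq hsplit.symm)
    have hk : k = a + b := by simpa using congrArg card hsplit
    rw [sum_replicate, sum_replicate, nsmul_eq_nsmul_iff_modEq, hd] at hsum
    rcases lt_trichotomy a b with hab | rfl | hab
    · have := Nat.le_of_dvd (by omega) ((Nat.modEq_iff_dvd' hab.le).1 hsum)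
      omega
    · exact Or.inl ⟨a, hk⟩
    · have := Nat.le_of_dvd (by omega) ((Nat.modEq_iff_dvd' hab.le).1 hsum.symm)
      omega
  · rintro (⟨m, rfl⟩ | hdk)
    · exact ⟨replicate m g, replicate m g, replicate_add _ _ _, rfl⟩
    · rcases Nat.even_or_odd k with ⟨m, rfl⟩ | hk
      · exact ⟨replicate m g, replicate m g, replicate_add _ _ _, rfl⟩
      · obtain ⟨m, hm⟩ := Nat.Odd.sub_odd hk hodd
        refine ⟨replicate (m + d) g, replicate m g, by rw [← replicate_add]; congr 1; omega, ?_⟩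
        rw [sum_replicate, sum_replicate, add_nsmul, ← hd, addOrderOf_nsmul_eq_zero, add_zero]

lemma replicate_mem_iff {S : AddSubmonoid (Multiset G)} (hd : addOrderOf g = d) (hodd : Odd d)
    (hle : PMZS ({g} : Set G) ≤ S) (hub : S ≤ PMZS (Set.univ : Set G)) (k : ℕ) :
    replicate k g ∈ S ↔ Even k ∨ d ≤ k := by
  rw [← isPMZeroSum_replicate_iff hd hodd]
  refine ⟨fun h => (hub h).2, fun h => hle ⟨fun x hx => eq_of_mem_replicate hx, h⟩⟩

end Replicate

section Intermediate

variable {g : G} {d : ℕ} {S : AddSubmonoid (Multiset G)}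

lemma isPMAtom_replicate_iff (hd : addOrderOf g = d) (hodd : Odd d) (h3 : 3 ≤ d)
    (hle : PMZS ({g} : Set G) ≤ S) (hub : S ≤ PMZS (Set.univ : Set G)) (k : ℕ) :
    IsPMAtom S (replicate k g) ↔ k = 2 ∨ k = d := by
  have hmem := replicate_mem_iff hd hodd hle hub
  have hodd' : d % 2 = 1 := Nat.odd_iff.1 hodd
  constructor
  · rintro ⟨hk, hne, hirr⟩
    rw [hmem] at hk
    have hk0 : k ≠ 0 := by rintro rfl; exact hne rfl
    by_contra! hk'
    -- an even `k ≥ 4` splits as `2 + (k - 2)`, an odd `k > d` as `d + (k - d)`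
    obtain ⟨i, hi, hi0, hki⟩ :
        ∃ i, (Even i ∨ d ≤ i) ∧ i ≠ 0 ∧ i < k ∧ (Even (k - i) ∨ d ≤ k - i) := by
      simp only [Nat.even_iff] at hk ⊢
      rcases Nat.mod_two_eq_zero_or_one k with he | ho
      · exact ⟨2, by omega⟩
      · exact ⟨d, by omega⟩
    have := hirr _ _ ((hmem i).2 hi) ((hmem (k - i)).2 hki.2)
      (by rw [← replicate_add]; congr; omega)
    simp only [replicate_eq_zero_iff] at this
    omega
  · intro hk
    refine ⟨(hmem k).2 ?_, ?_, fun B C hB hC hBC => ?_⟩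
    · rcases hk with rfl | rfl
      exacts [Or.inl even_two, Or.inr le_rfl]
    · rw [ne_eq, replicate_eq_zero_iff]; omega
    obtain ⟨i, -, rfl⟩ := le_replicate_iff.1 ((le_add_right B C).trans_eq hBC.symm)
    obtain ⟨j, -, rfl⟩ := le_replicate_iff.1 ((le_add_left C _).trans_eq hBC.symm)
    have hij : k = i + j := by simpa using congrArg card hBC
    rw [hmem, Nat.even_iff] at hB hC
    simp only [replicate_eq_zero_iff]
    omega

lemma exists_length_eq_of_sum_eq_replicate (hd : addOrderOf g = d) (hodd : Odd d) (h3 : 3 ≤ d)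
    (hle : PMZS ({g} : Set G) ≤ S) (hub : S ≤ PMZS (Set.univ : Set G))
    {l : List (Multiset G)} (hl : ∀ A ∈ l, IsPMAtom S A) {N : ℕ} (hsum : l.sum = replicate N g) :
    ∃ a b : ℕ, l.length = a + b ∧ N = 2 * a + d * b := by
  induction l generalizing N with
  | nil => exact ⟨0, 0, rfl, by simpa [eq_comm] using congrArg card hsum⟩
  | cons A t ih =>
    rw [List.sum_cons] at hsum
    obtain ⟨k, -, rfl⟩ := le_replicate_iff.1 ((le_add_right A t.sum).trans_eq hsum)
    obtain ⟨M, -, htM⟩ := le_replicate_iff.1 ((le_add_left t.sum _).trans_eq hsum)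
    have hN : N = k + M := by simpa [htM] using (congrArg card hsum).symm
    obtain ⟨a, b, hab, hM⟩ := ih (fun B hB => hl B (List.mem_cons_of_mem _ hB)) htM
    rcases (isPMAtom_replicate_iff hd hodd h3 hle hub k).1 (hl _ List.mem_cons_self) with rfl | rfl
    · exact ⟨a + 1, b, by simp [hab]; ring, by rw [hN, hM]; ring⟩
    · exact ⟨a, b + 1, by simp [hab]; ring, by rw [hN, hM]; ring⟩

lemma lengthSet_replicate_two_mul (hd : addOrderOf g = d) (hodd : Odd d) (h3 : 3 ≤ d)
    (hle : PMZS ({g} : Set G) ≤ S) (hub : S ≤ PMZS (Set.univ : Set G)) :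
    LengthSet S (replicate (2 * d) g) = {2, d} := by
  have hatom := isPMAtom_replicate_iff hd hodd h3 hle hub
  ext k
  constructor
  · rintro ⟨l, hl, hsum, rfl⟩
    obtain ⟨a, b, hab, hN⟩ := exists_length_eq_of_sum_eq_replicate hd hodd h3 hle hub hl hsum
    have hb : b ≤ 2 := Nat.le_of_mul_le_mul_left (by omega : d * b ≤ d * 2) (by omega)
    have hodd' : d % 2 = 1 := Nat.odd_iff.1 hodd
    interval_cases b <;> simp only [Set.mem_insert_iff, Set.mem_singleton_iff] <;> omega
  · rintro (rfl | rfl)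
    · refine ⟨[replicate d g, replicate d g], ?_, ?_, rfl⟩
      · simpa using (hatom d).2 (Or.inr rfl)
      · simp [← replicate_add, two_mul]
    · refine ⟨List.replicate k (replicate 2 g), ?_, ?_, List.length_replicate⟩
      · simpa [List.mem_replicate] using fun _ => (hatom 2).2 (Or.inl rfl)
      · rw [List.sum_replicate, nsmul_replicate, mul_comm]

lemma sub_two_mem_deltaM (hd : addOrderOf g = d) (hodd : Odd d) (h3 : 3 ≤ d)
    (hle : PMZS ({g} : Set G) ≤ S) (hub : S ≤ PMZS (Set.univ : Set G)) : d - 2 ∈ DeltaM S := by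
  refine ⟨replicate (2 * d) g, (replicate_mem_iff hd hodd hle hub _).2 (Or.inl (even_two_mul d)),
    ?_⟩
  rw [lengthSet_replicate_two_mul hd hodd h3 hle hub]
  refine ⟨by omega, 2, by simp, by simp [show 2 + (d - 2) = d by omega], ?_⟩
  rintro b (rfl | rfl) hb <;> omega

end Intermediate

lemma dvd_of_mem_deltaM_PMZS_singleton {g : G} {d : ℕ} (hd : addOrderOf g = d) (hodd : Odd d)
    (h3 : 3 ≤ d) {e : ℕ} (he : e ∈ DeltaM (PMZS ({g} : Set G))) : d - 2 ∣ e := by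
  obtain ⟨T, hT, -, y, hy, hye, -⟩ := he
  have hlen : ∀ z ∈ LengthSet (PMZS ({g} : Set G)) T, ∃ b, 2 * z + (d - 2) * b = card T := by
    rintro z ⟨l, hl, hsum, rfl⟩
    obtain ⟨a, b, hab, hN⟩ := exists_length_eq_of_sum_eq_replicate hd hodd h3 le_rfl
      (isDivClosed_PMZS _).1 hl (hsum.trans (eq_replicate_of_mem_PMZS_singleton hT))
    refine ⟨b, ?_⟩
    rw [Nat.sub_mul, hab, hN]
    have : 2 * b ≤ d * b := Nat.mul_le_mul_right b (by omega)
    omega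
  obtain ⟨b₁, hb₁⟩ := hlen y hy
  obtain ⟨b₂, hb₂⟩ := hlen (y + e) hye
  have hcop : Nat.Coprime (d - 2) 2 :=
    Nat.coprime_two_right.2 (Nat.Odd.sub_even (by omega) hodd even_two)
  refine hcop.dvd_of_dvd_mul_left ⟨b₁ - b₂, ?_⟩
  rw [Nat.mul_sub]
  omega

section Distances

variable {α : Type*} {S : AddSubmonoid (Multiset α)}

lemma add_mem_lengthSet_add_s7 {a b : Multiset α} {x y : ℕ} (hx : x ∈ LengthSet S a)
    (hy : y ∈ LengthSet S b) : x + y ∈ LengthSet S (a + b) := by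
  obtain ⟨l₁, hl₁, rfl, rfl⟩ := hx
  obtain ⟨l₂, hl₂, rfl, rfl⟩ := hy
  exact ⟨l₁ ++ l₂, fun A hA => (List.mem_append.1 hA).elim (hl₁ A) (hl₂ A),
    List.sum_append, List.length_append⟩

lemma mul_mem_lengthSet_nsmul_s7 {a : Multiset α} {x : ℕ} (hx : x ∈ LengthSet S a) (n : ℕ) :
    n * x ∈ LengthSet S (n • a) := by
  induction n with
  | zero => exact ⟨[], by simp, rfl, by simp⟩
  | succ n ih => simpa [succ_nsmul, add_mul] using add_mem_lengthSet_add_s7 ih hx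

lemma exists_mem_distSet_le {L : Set ℕ} {u v : ℕ} (hu : u ∈ L) (hv : v ∈ L) (huv : u < v) :
    ∃ e ∈ DistSet L, e ≤ v - u := by
  classical
  -- the largest element of `L` below `v` and `v` itself are consecutive in `L`
  let P : ℕ → Prop := fun l => l ∈ L ∧ l < v
  set w := Nat.findGreatest P v
  have hw : w ∈ L ∧ w < v := Nat.findGreatest_spec (P := P) huv.le ⟨hu, huv⟩
  have huw : u ≤ w := Nat.le_findGreatest (P := P) huv.le ⟨hu, huv⟩
  refine ⟨v - w, ?_, by omega⟩
  refine ⟨by omega, w, hw.1, by rwa [Nat.add_sub_cancel' hw.2.le], fun b hb hwb => ?_⟩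
  by_contra! hbv
  exact Nat.findGreatest_is_greatest hwb (by omega) ⟨hb, by omega⟩

lemma sInf_deltaM_dvd {e : ℕ} (he : e ∈ DeltaM S) : sInf (DeltaM S) ∣ e := by
  obtain ⟨a, haS, hm, x, hx, hxm, -⟩ := Nat.sInf_mem ⟨e, he⟩
  set m := sInf (DeltaM S)
  obtain ⟨b, hbS, -, y, hy, hye, -⟩ := he
  -- in `L(b + e a)`, lengths `y + e x + j m` (for `j ≤ e`) and `y + e x + e` are `e % m` apart
  have hlen : ∀ j ≤ e, y + e * x + j * m ∈ LengthSet S (b + e • a) := by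
    intro j hj
    have h := add_mem_lengthSet_add_s7 hy (add_mem_lengthSet_add_s7
      (mul_mem_lengthSet_nsmul_s7 hx (e - j)) (mul_mem_lengthSet_nsmul_s7 hxm j))
    rw [← add_nsmul, Nat.sub_add_cancel hj] at h
    convert h using 1
    rw [Nat.sub_mul, Nat.mul_add]
    have : j * x ≤ e * x := Nat.mul_le_mul_right x hj
    omega
  have hv : y + e * x + e ∈ LengthSet S (b + e • a) := by
    simpa [add_right_comm] using add_mem_lengthSet_add_s7 hye (mul_mem_lengthSet_nsmul_s7 hx e)
  have hdiv : e / m * m + e % m = e := Nat.div_add_mod' e m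
  by_contra hnd
  have hr : 0 < e % m := Nat.pos_of_ne_zero fun h => hnd (Nat.dvd_of_mod_eq_zero h)
  obtain ⟨f, hf, hfe⟩ := exists_mem_distSet_le (hlen (e / m) (Nat.div_le_self e m)) hv
    (by omega)
  have hmf : m ≤ f := Nat.sInf_le ⟨b + e • a, S.add_mem hbS (S.nsmul_mem haS e), hf⟩
  have := Nat.mod_lt e hm
  omega

end Distances

section DivClosed

variable {S : AddSubmonoid (Multiset G)}

lemma card_eq_one_of_isPMAtom (hdc : IsDivClosed (PMZS (Set.univ : Set G)) S) {A : Multiset G}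
    (hA : IsPMAtom S A) (h0 : ∀ x ∈ A, x = 0) : card A = 1 := by
  obtain ⟨hAS, hA0, hirr⟩ := hA
  rw [← eq_replicate_card] at h0
  set k := card A
  have hmem : ∀ i ≤ k, replicate i (0 : G) ∈ S := fun i hi =>
    hdc.2 A hAS _ (mem_PMZS_univ.2 (isPMZeroSum_replicate_zero i))
      ⟨replicate (k - i) 0, mem_PMZS_univ.2 (isPMZeroSum_replicate_zero _),
        by rw [← replicate_add, Nat.add_sub_cancel' hi, ← h0]⟩
  have hk0 : k ≠ 0 := fun h => hA0 (card_eq_zero.1 h)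
  by_contra hk1
  have := hirr _ _ (hmem 1 (by omega)) (hmem (k - 1) (Nat.sub_le k 1))
    (by rw [← replicate_add, Nat.add_sub_cancel' (by omega), ← h0])
  rw [replicate_eq_zero_iff, replicate_eq_zero_iff] at this
  omega

lemma exists_ne_zero_of_deltaM_nonempty (hdc : IsDivClosed (PMZS (Set.univ : Set G)) S)
    (hne : (DeltaM S).Nonempty) : ∃ T ∈ S, ∃ g ∈ T, g ≠ 0 := by
  by_contra! h0
  obtain ⟨e, T, hT, he, y, ⟨l₁, hl₁, hs₁, rfl⟩, ⟨l₂, hl₂, hs₂, hlen⟩, -⟩ := hne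
  -- all atoms are the one-term sequence `0`, so every length of `T` equals `card T`
  have hcard : ∀ l : List (Multiset G), (∀ A ∈ l, IsPMAtom S A) → l.length = card l.sum := by
    intro l hl
    induction l with
    | nil => rfl
    | cons A t ih =>
      have hA := hl A List.mem_cons_self
      rw [List.length_cons, List.sum_cons, card_add,
        card_eq_one_of_isPMAtom hdc hA (h0 A hA.1), ih fun B hB => hl B (List.mem_cons_of_mem _ hB),
        add_comm]
  have h₁ := hcard l₁ hl₁
  have h₂ := hcard l₂ hl₂
  rw [hs₁] at h₁
  rw [hs₂] at h₂
  omega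

lemma PMZS_singleton_le_of_mem (hdc : IsDivClosed (PMZS (Set.univ : Set G)) S) {T : Multiset G}
    (hT : T ∈ S) {g : G} (hg : g ∈ T) : PMZS ({g} : Set G) ≤ S := by
  obtain ⟨R, rfl⟩ := exists_cons_of_mem hg
  -- `g²` divides `T + T` and `U` divides `U + U = (g²)^N`, with cofactors `R + R` and `U` in `H`
  have h2 : replicate 2 g ∈ S :=
    hdc.2 _ (S.add_mem hT hT) _ (mem_PMZS_univ.2 (isPMZeroSum_add_self {g}))
      ⟨R + R, mem_PMZS_univ.2 (isPMZeroSum_add_self R), by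
        rw [← singleton_add, show replicate 2 g = {g} + {g} from rfl]; abel⟩
  intro U hU
  have hUU : U + U ∈ S := by
    rw [eq_replicate_of_mem_PMZS_singleton hU, ← replicate_add, ← two_mul, mul_comm,
      ← nsmul_replicate]
    exact S.nsmul_mem h2 _
  exact hdc.2 _ hUU U ((isDivClosed_PMZS _).1 hU) ⟨U, (isDivClosed_PMZS _).1 hU, rfl⟩

end DivClosed

lemma sub_two_mem_deltaStar {g : G} {d : ℕ} (hd : addOrderOf g = d) (hodd : Odd d) (h3 : 3 ≤ d) :
    d - 2 ∈ DeltaStar (PMZS (Set.univ : Set G)) := by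
  have hmem := sub_two_mem_deltaM hd hodd h3 le_rfl (isDivClosed_PMZS _).1
  refine ⟨PMZS {g}, isDivClosed_PMZS _, ⟨_, hmem⟩, Nat.dvd_antisymm ?_ (sInf_deltaM_dvd hmem)⟩
  exact dvd_of_mem_deltaM_PMZS_singleton hd hodd h3 (Nat.sInf_mem ⟨_, hmem⟩)

lemma exists_dvd_sub_two_of_mem_deltaStar (hodd : Odd (AddMonoid.exponent G)) {m : ℕ}
    (hm : m ∈ DeltaStar (PMZS (Set.univ : Set G))) :
    ∃ d, d ∣ AddMonoid.exponent G ∧ 3 ≤ d ∧ m ∣ d - 2 := by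
  obtain ⟨S, hdc, hne, rfl⟩ := hm
  obtain ⟨T, hT, g, hg, hg0⟩ := exists_ne_zero_of_deltaM_nonempty hdc hne
  have hdvd := AddMonoid.addOrder_dvd_exponent g
  have hodd' : Odd (addOrderOf g) := hodd.of_dvd_nat hdvd
  have h3 : 3 ≤ addOrderOf g := by
    have : addOrderOf g ≠ 1 := fun h => hg0 (AddMonoid.addOrderOf_eq_one_iff.1 h)
    obtain ⟨t, ht⟩ := hodd'
    omega
  exact ⟨_, hdvd, h3, sInf_deltaM_dvd (sub_two_mem_deltaM rfl hodd' h3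
    (PMZS_singleton_le_of_mem hdc hT hg) hdc.1)⟩

theorem stmt_7_general (G : Type*) [AddCommGroup G]
    (hodd : Odd (AddMonoid.exponent G)) (h3 : 3 ≤ AddMonoid.exponent G) :
    {m : ℕ | ∃ d : ℕ, d ∣ AddMonoid.exponent G ∧ 3 ≤ d ∧ m = d - 2} ⊆
        DeltaStar (PMZS (Set.univ : Set G)) ∧
    DeltaStar (PMZS (Set.univ : Set G)) ⊆
        {d' : ℕ | ∃ d : ℕ, d ∣ AddMonoid.exponent G ∧ 3 ≤ d ∧ d' ∣ d - 2} ∧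
    IsGreatest (DeltaStar (PMZS (Set.univ : Set G))) (AddMonoid.exponent G - 2) := by
  have hsub : {m : ℕ | ∃ d : ℕ, d ∣ AddMonoid.exponent G ∧ 3 ≤ d ∧ m = d - 2} ⊆
      DeltaStar (PMZS (Set.univ : Set G)) := by
    rintro _ ⟨d, hd, h3d, rfl⟩
    obtain ⟨g, hg⟩ := exists_addOrderOf_eq_of_dvd_exponent hodd.pos.ne' hd
    exact sub_two_mem_deltaStar hg (hodd.of_dvd_nat hd) h3d
  refine ⟨hsub, fun _ => exists_dvd_sub_two_of_mem_deltaStar hodd,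
    hsub ⟨_, dvd_rfl, h3, rfl⟩, fun m hm => ?_⟩
  obtain ⟨d, hd, h3d, hmd⟩ := exists_dvd_sub_two_of_mem_deltaStar hodd hm
  have := Nat.le_of_dvd (by omega) hmd
  have := Nat.le_of_dvd hodd.pos hd
  omega

/-- For `G` finite abelian with odd exponent `n ≥ 3` and `H = B±(G)`:
with `D₁ = {d - 2 : d ∣ n, d ≥ 3}` and `D₂ = {d' : d' ∣ d for some d ∈ D₁}`, one has
`D₁ ⊆ Δ*(H) ⊆ D₂`; in particular `max Δ*(H) = n - 2`. -/
theorem stmt_7 (G : Type*) [AddCommGroup G] [Finite G]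
    (hodd : Odd (AddMonoid.exponent G)) (h3 : 3 ≤ AddMonoid.exponent G) :
    {m : ℕ | ∃ d : ℕ, d ∣ AddMonoid.exponent G ∧ 3 ≤ d ∧ m = d - 2} ⊆
        DeltaStar (PMZS (Set.univ : Set G)) ∧
    DeltaStar (PMZS (Set.univ : Set G)) ⊆
        {d' : ℕ | ∃ d : ℕ, d ∣ AddMonoid.exponent G ∧ 3 ≤ d ∧ d' ∣ d - 2} ∧
    IsGreatest (DeltaStar (PMZS (Set.univ : Set G))) (AddMonoid.exponent G - 2) :=
  stmt_7_general G hodd h3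
end
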